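/- (Existence theorem.) The system σ is consistent (A ≠ ∅) if and only if (0_{X*}, −1) ∉ w*-cl cone(epi δ_C* ∪ ⋃_{i∈I} epi f_i*), and this holds if and only if (0_{X*}, −1) ∉ w*-cl cone(⋃_{i∈I} gph f_i* ∪ gph δ_C*), where gph h = {(x*, h(x*)) : x* ∈ X*, h(x*) ∈ ℝ}. -/

import Mathlib

open Pointwise

noncomputable section

variable {X : Type*} [AddCommGroup X] [Module ℝ X] [TopologicalSpace X]

/-- Fenchel conjugate, as a function on the weak-* dual. -/
def conjFn (h : X → EReal) : WeakDual ℝ X → EReal :=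
  fun p => ⨆ x : X, (p x : EReal) - h x

/-- Epigraph of an extended-real-valued function. -/
def epiFn {V : Type*} (h : V → EReal) : Set (V × ℝ) :=
  {q | h q.1 ≤ (q.2 : EReal)}

/-- Graph of an extended-real-valued function (where it is finite). -/
def gphFn {V : Type*} (h : V → EReal) : Set (V × ℝ) :=
  {q | h q.1 = (q.2 : EReal)}

/-- Effective domain. -/
def domFn {V : Type*} (h : V → EReal) : Set V :=
  {x | h x < ⊤}

open Classical in
/-- Indicator function of a set. -/
def indicatorE {V : Type*} (D : Set V) : V → EReal :=
  fun x => if x ∈ D then (0 : EReal) else ⊤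

/-- Convex cone generated by `D ∪ {0}`. -/
def coneGen {V : Type*} [AddCommGroup V] [Module ℝ V] (D : Set V) : Set V :=
  {0} ∪ {y | ∃ t : ℝ, 0 ≤ t ∧ ∃ x ∈ convexHull ℝ D, y = t • x}

/-- `h ∈ Γ(X)`: proper, convex and lower semicontinuous. -/
def InGamma (h : X → EReal) : Prop :=
  (∀ x, h x ≠ ⊥) ∧ (∃ x, h x ≠ ⊤) ∧
    Convex ℝ {q : X × ℝ | h q.1 ≤ (q.2 : EReal)} ∧ LowerSemicontinuous h

/-- Solution set `A` of the system `σ = {f i x ≤ 0, i ∈ I; x ∈ C}`. -/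
def solSet {I : Type*} (C : Set X) (f : I → X → EReal) : Set X :=
  {x | x ∈ C ∧ ∀ i, f i x ≤ (0 : EReal)}

/-- Characteristic cone `K = cone (epi δ_C* ∪ ⋃ i, epi f_i*)` of the system. -/
def charCone {I : Type*} (C : Set X) (f : I → X → EReal) : Set (WeakDual ℝ X × ℝ) :=
  coneGen (epiFn (conjFn (indicatorE C)) ∪ ⋃ i, epiFn (conjFn (f i)))

/-- Barrier cone `barr C = dom δ_C*`. -/
def barCone (C : Set X) : Set (WeakDual ℝ X) :=
  domFn (conjFn (indicatorE C))

/-- The Farkas–Minkowski constraint qualification. -/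
def IsFM {I : Type*} (C : Set X) (f : I → X → EReal) : Prop :=
  (solSet C f).Nonempty ∧ IsClosed (charCone C f)

/-- Recession function `h^∞ = δ*_{dom h*}`. -/
def recFn (h : X → EReal) : X → EReal :=
  fun x => ⨆ q ∈ domFn (conjFn h), ((q x : ℝ) : EReal)

/-- Recession cone `D^∞ = ⋂_{t>0} t (D - a)`, for any `a ∈ D`. -/
def recCone (D : Set X) : Set X :=
  {d | ∀ a ∈ D, ∀ t : ℝ, 0 < t → d ∈ t • (D - ({a} : Set X))}

/-- Subdifferential of `h` at `a`. -/
def subdiff (h : X → EReal) (a : X) : Set (WeakDual ℝ X) :=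
  {p | (∃ r : ℝ, h a = (r : EReal)) ∧ ∀ x, h a + ((p (x - a) : ℝ) : EReal) ≤ h x}

/-!
If `a` solves the system, every generator `(p, r)` of the characteristic cone satisfies
`p a ≤ r`; this closed half-space is a convex cone missing `(0, -1)`. Conversely, if `(0, -1)`
lies outside the closed cone generated by the graphs of the conjugates, a weak*-continuous
functional separates them. It has the form `(p, r) ↦ p a + μ r` with `μ < 0`, so after scaling
`p a ≤ f_i* p` wherever `f_i*` is finite, and likewise for `δ_C*`. For a proper lower
semicontinuous convex `f` this forces `f a ≤ 0`: separating `(a, ρ)` from `epi f` for `ρ < f a`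
yields some `p` with `ρ < p a - f* p`. Finally the cone of the graphs lies in that of the
epigraphs, which closes the circle of implications.
-/

section ConeGen

variable {V : Type*} [AddCommGroup V] [Module ℝ V]

lemma coneGen_mono {D D' : Set V} (h : D ⊆ D') : coneGen D ⊆ coneGen D' := by
  rintro y (h0 | ⟨t, ht, x, hx, rfl⟩)
  · exact Or.inl h0
  · exact Or.inr ⟨t, ht, x, convexHull_mono h hx, rfl⟩

lemma smul_mem_coneGen {D : Set V} {t : ℝ} (ht : 0 ≤ t) {y : V} (hy : y ∈ coneGen D) :
    t • y ∈ coneGen D := by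
  rcases hy with rfl | ⟨s, hs, x, hx, rfl⟩
  · exact Or.inl (smul_zero t)
  · exact Or.inr ⟨t * s, mul_nonneg ht hs, x, hx, smul_smul t s x⟩

lemma convex_coneGen (D : Set V) : Convex ℝ (coneGen D) := by
  rintro y₁ hy₁ y₂ hy₂ a b ha hb -
  rcases hy₁ with rfl | ⟨t₁, ht₁, x₁, hx₁, rfl⟩
  · rw [smul_zero, zero_add]
    exact smul_mem_coneGen hb hy₂
  rcases hy₂ with rfl | ⟨t₂, ht₂, x₂, hx₂, rfl⟩
  · rw [smul_zero, add_zero]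
    exact smul_mem_coneGen ha (Or.inr ⟨t₁, ht₁, x₁, hx₁, rfl⟩)
  obtain ⟨z, hz, hcomb⟩ := (convex_convexHull ℝ D).exists_mem_add_smul_eq hx₁ hx₂
    (mul_nonneg ha ht₁) (mul_nonneg hb ht₂)
  refine Or.inr ⟨a * t₁ + b * t₂, by positivity, z, hz, ?_⟩
  rw [hcomb, smul_smul, smul_smul]

lemma coneGen_subset {D W : Set V} (hW : Convex ℝ W) (hsmul : ∀ t : ℝ, 0 ≤ t → ∀ y ∈ W, t • y ∈ W)
    (h0 : (0 : V) ∈ W) (hD : D ⊆ W) : coneGen D ⊆ W := by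
  rintro y (rfl | ⟨t, ht, x, hx, rfl⟩)
  · exact h0
  · exact hsmul t ht x (convexHull_min hD hW hx)

end ConeGen

lemma ContinuousLinearMap.apply_prodMk_eq {V : Type*} [AddCommGroup V] [Module ℝ V]
    [TopologicalSpace V] (L : V × ℝ →L[ℝ] ℝ) (x : V) (s : ℝ) :
    L (x, s) = L (x, 0) + s * L (0, 1) := by
  have hxs : (x, s) = (x, (0 : ℝ)) + s • ((0 : V), (1 : ℝ)) := by simp
  rw [hxs, map_add, map_smul, smul_eq_mul]

lemma exists_forall_le_zero_of_notMem_closure_coneGen {V : Type*} [AddCommGroup V] [Module ℝ V]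
    [TopologicalSpace V] [IsTopologicalAddGroup V] [ContinuousSMul ℝ V] [LocallyConvexSpace ℝ V]
    {D : Set V} {z : V} (hz : z ∉ closure (coneGen D)) :
    ∃ L : V →L[ℝ] ℝ, 0 < L z ∧ ∀ y ∈ D, L y ≤ 0 := by
  obtain ⟨L, u, hlt, hzu⟩ :=
    geometric_hahn_banach_closed_point (convex_coneGen D).closure isClosed_closure hz
  have hu : 0 < u := by simpa using hlt 0 (subset_closure (Or.inl rfl))
  refine ⟨L, hu.trans hzu, fun y hy => ?_⟩
  by_contra! hpos
  -- the ray through `y` lies in the cone, but `L` is unbounded on it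
  have hray := hlt ((u / L y) • y)
    (subset_closure (Or.inr ⟨u / L y, by positivity, y, subset_convexHull ℝ D hy, rfl⟩))
  rw [map_smul, smul_eq_mul, div_mul_cancel₀ _ hpos.ne'] at hray
  exact lt_irrefl u hray

instance : LocallyConvexSpace ℝ (WeakDual ℝ X) :=
  WeakBilin.locallyConvexSpace (B := topDualPairing ℝ X)

lemma isClosed_epiFn {V : Type*} [TopologicalSpace V] {f : V → EReal}
    (hf : LowerSemicontinuous f) : IsClosed (epiFn f) :=
  hf.isClosed_epigraph.preimage
    (continuous_fst.prodMk (continuous_coe_real_ereal.comp continuous_snd))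

lemma gphFn_subset_epiFn {V : Type*} (h : V → EReal) : gphFn h ⊆ epiFn h :=
  fun _ hq => le_of_eq hq

section DualHalfspace

def dualHalfspace (a : X) : Set (WeakDual ℝ X × ℝ) :=
  {q | q.1 a ≤ q.2}

lemma coneGen_subset_dualHalfspace {D : Set (WeakDual ℝ X × ℝ)} {a : X}
    (hD : D ⊆ dualHalfspace a) : coneGen D ⊆ dualHalfspace a := by
  refine coneGen_subset ?_ (fun t ht q hq => ?_) (le_refl (0 : ℝ)) hD
  · rintro q₁ hq₁ q₂ hq₂ s t hs ht -
    change s * q₁.1 a + t * q₂.1 a ≤ s * q₁.2 + t * q₂.2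
    linarith [mul_le_mul_of_nonneg_left hq₁ hs, mul_le_mul_of_nonneg_left hq₂ ht]
  · exact mul_le_mul_of_nonneg_left hq ht

lemma notMem_closure_coneGen_of_subset_dualHalfspace {D : Set (WeakDual ℝ X × ℝ)} {a : X}
    (hD : D ⊆ dualHalfspace a) : ((0 : WeakDual ℝ X), (-1 : ℝ)) ∉ closure (coneGen D) := by
  have hcl : IsClosed (dualHalfspace a) :=
    isClosed_le ((WeakDual.eval_continuous a).comp continuous_fst) continuous_snd
  intro hmem
  have h := hcl.closure_subset_iff.2 (coneGen_subset_dualHalfspace hD) hmem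
  change (0 : ℝ) ≤ -1 at h
  norm_num at h

lemma exists_subset_dualHalfspace_of_notMem_closure_coneGen [IsTopologicalAddGroup X]
    [ContinuousSMul ℝ X] {D : Set (WeakDual ℝ X × ℝ)}
    (hD : ((0 : WeakDual ℝ X), (-1 : ℝ)) ∉ closure (coneGen D)) :
    ∃ a : X, D ⊆ dualHalfspace a := by
  obtain ⟨L, hL, hLD⟩ := exists_forall_le_zero_of_notMem_closure_coneGen hD
  -- weak*-continuous functionals on `X*` are evaluations at points of `X`
  obtain ⟨a₀, ha₀⟩ := (topDualPairing ℝ X).dualEmbedding_surjective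
    (L.comp (ContinuousLinearMap.inl ℝ (WeakDual ℝ X) ℝ))
  have hL_apply (p : WeakDual ℝ X) (r : ℝ) : L (p, r) = p a₀ + r * L (0, 1) := by
    rw [L.apply_prodMk_eq]
    exact congrArg (· + r * L (0, 1)) (DFunLike.congr_fun ha₀ p).symm
  set μ := L (0, 1)
  have hμ : μ < 0 := by
    have h : 0 < (0 : WeakDual ℝ X) a₀ + -1 * μ := hL_apply 0 (-1) ▸ hL
    have h0 : (0 : WeakDual ℝ X) a₀ = 0 := rfl
    linarith
  refine ⟨(-μ)⁻¹ • a₀, fun q hq => ?_⟩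
  have h := hLD q hq
  rw [hL_apply] at h
  change q.1 ((-μ)⁻¹ • a₀) ≤ q.2
  rw [map_smul, smul_eq_mul, inv_mul_le_iff₀ (by linarith)]
  linarith

end DualHalfspace

section Conjugate

lemma epiFn_conjFn_subset_dualHalfspace {f : X → EReal} {a : X} (ha : f a ≤ 0) :
    epiFn (conjFn f) ⊆ dualHalfspace a := by
  rintro ⟨p, r⟩ hpr
  have h : (p a : EReal) - f a ≤ conjFn f p := le_iSup (fun x => (p x : EReal) - f x) a
  have h' : (p a : EReal) - 0 ≤ (p a : EReal) - f a := EReal.sub_le_sub le_rfl ha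
  rw [sub_zero] at h'
  exact EReal.coe_le_coe_iff.1 (h'.trans (h.trans hpr))

lemma conjFn_le_coe_iff {f : X → EReal} {p : WeakDual ℝ X} {β : ℝ} :
    conjFn f p ≤ β ↔ ∀ x (s : ℝ), f x ≤ s → p x - s ≤ β := by
  refine ⟨fun h x s hxs => ?_, fun h => iSup_le fun x => ?_⟩
  · have hle : (p x : EReal) - s ≤ p x - f x := EReal.sub_le_sub le_rfl hxs
    exact EReal.coe_le_coe_iff.1 ((hle.trans (le_iSup (fun x => (p x : EReal) - f x) x)).trans h)
  induction hfx : f x using EReal.rec with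
  | bot =>
    have := h x (p x - β - 1) (by simp [hfx])
    linarith
  | coe s =>
    rw [← EReal.coe_sub]
    exact EReal.coe_le_coe_iff.2 (h x s hfx.le)
  | top => simp

lemma lt_sub_conjFn_of_conjFn_le {f : X → EReal} {p : WeakDual ℝ X} {a : X} {β ρ : ℝ}
    (hβ : conjFn f p ≤ β) (hρ : ρ < p a - β) : (ρ : EReal) < p a - conjFn f p :=
  calc (ρ : EReal) < ((p a - β : ℝ) : EReal) := EReal.coe_lt_coe_iff.2 hρ
    _ = p a - β := EReal.coe_sub _ _
    _ ≤ p a - conjFn f p := EReal.sub_le_sub le_rfl hβ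

lemma conjFn_smul_le_of_separation {f : X → EReal} {g : WeakDual ℝ X} {c u : ℝ} (hc : c < 0)
    (hsep : ∀ x (s : ℝ), f x ≤ s → g x + c * s < u) :
    conjFn f ((-c)⁻¹ • g) ≤ ((u / -c : ℝ) : EReal) := by
  refine conjFn_le_coe_iff.2 fun x s hxs => ?_
  change (-c)⁻¹ * g x - s ≤ u / -c
  have hc' : (-c)⁻¹ * g x = g x / -c := inv_mul_eq_div _ _
  rw [hc', div_sub' (by linarith), div_le_div_iff_of_pos_right (by linarith)]
  linarith [hsep x s hxs]

lemma conjFn_ne_bot {f : X → EReal} {x₀ : X} (hx₀ : f x₀ ≠ ⊤) (p : WeakDual ℝ X) :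
    conjFn f p ≠ ⊥ := by
  intro h
  have hle : (p x₀ : EReal) - f x₀ ≤ conjFn f p := le_iSup (fun x => (p x : EReal) - f x) x₀
  rw [h, le_bot_iff, sub_eq_add_neg, EReal.add_eq_bot_iff, EReal.neg_eq_bot_iff] at hle
  exact hle.elim (EReal.coe_ne_bot _) hx₀

variable [IsTopologicalAddGroup X] [ContinuousSMul ℝ X] [LocallyConvexSpace ℝ X]

lemma exists_separation_epiFn {f : X → EReal} (hconv : Convex ℝ (epiFn f))
    (hcl : IsClosed (epiFn f)) {x₀ : X} (hx₀ : f x₀ ≠ ⊤) {b : X} {ρ : ℝ} (hb : (ρ : EReal) < f b) :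
    ∃ (g : WeakDual ℝ X) (c u : ℝ), c ≤ 0 ∧
      (∀ x (s : ℝ), f x ≤ s → g x + c * s < u) ∧ u < g b + c * ρ := by
  obtain ⟨L, u, hepi, hbρ⟩ := geometric_hahn_banach_closed_point (x := (b, ρ)) hconv hcl
    (not_le.2 hb)
  set g := StrongDual.toWeakDual (L.comp (ContinuousLinearMap.inl ℝ X ℝ))
  set c := L (0, 1)
  have hL_apply (x : X) (s : ℝ) : L (x, s) = g x + c * s := by
    rw [L.apply_prodMk_eq, mul_comm]
    rfl
  have hsep (x : X) (s : ℝ) (hxs : f x ≤ s) : g x + c * s < u := hL_apply x s ▸ hepi (x, s) hxs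
  refine ⟨g, c, u, ?_, hsep, hL_apply b ρ ▸ hbρ⟩
  -- the epigraph contains the upward vertical ray over `x₀`
  by_contra! hc
  obtain ⟨s₀, hs₀⟩ : ∃ s₀ : ℝ, f x₀ ≤ s₀ := by
    obtain ⟨s₀, hs₀, -⟩ := EReal.exists_between_coe_real (lt_top_iff_ne_top.2 hx₀)
    exact ⟨s₀, hs₀.le⟩
  set s := max s₀ ((u - g x₀) / c)
  have hs : f x₀ ≤ s := hs₀.trans (EReal.coe_le_coe_iff.2 (le_max_left _ _))
  have hcs : u - g x₀ ≤ c * s := (div_le_iff₀' hc).1 (le_max_right _ _)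
  linarith [hsep x₀ s hs]

lemma exists_lt_sub_conjFn {f : X → EReal} (hf : InGamma f) {a : X} {ρ : ℝ}
    (ha : (ρ : EReal) < f a) : ∃ p : WeakDual ℝ X, (ρ : EReal) < p a - conjFn f p := by
  obtain ⟨hbot, ⟨x₀, hx₀⟩, hconv, hlsc⟩ := hf
  have hcl := isClosed_epiFn hlsc
  -- an affine minorant of `f`, from a non-vertical hyperplane below the graph at `x₀`
  obtain ⟨p₀, β₀, hp₀⟩ : ∃ (p₀ : WeakDual ℝ X) (β₀ : ℝ), conjFn f p₀ ≤ β₀ := by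
    obtain ⟨ρ₀, hρ₀, hρ₀'⟩ := EReal.exists_between_coe_real (bot_lt_iff_ne_bot.2 (hbot x₀))
    obtain ⟨s₀, hs₀, -⟩ := EReal.exists_between_coe_real (lt_top_iff_ne_top.2 hx₀)
    obtain ⟨g₀, c₀, u₀, hc₀, hsep₀, hu₀⟩ := exists_separation_epiFn hconv hcl hx₀ hρ₀'
    have hρs : ρ₀ < s₀ := EReal.coe_lt_coe_iff.1 (hρ₀'.trans hs₀)
    have hc₀' : c₀ < 0 := by
      refine hc₀.lt_of_ne fun h => ?_
      have := hsep₀ x₀ s₀ hs₀.le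
      simp only [h, zero_mul, add_zero] at this hu₀
      linarith
    exact ⟨_, _, conjFn_smul_le_of_separation hc₀' hsep₀⟩
  obtain ⟨g, c, u, hc, hsep, hu⟩ := exists_separation_epiFn hconv hcl hx₀ ha
  rcases hc.lt_or_eq with hc | rfl
  · refine ⟨_, lt_sub_conjFn_of_conjFn_le (conjFn_smul_le_of_separation hc hsep) ?_⟩
    change ρ < (-c)⁻¹ * g a - u / -c
    rw [inv_mul_eq_div, div_sub_div_same, lt_div_iff₀ (by linarith)]
    linarith
  · -- a vertical hyperplane: tilt the minorant `p₀` along `g`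
    simp only [zero_mul, add_zero] at hsep hu
    obtain ⟨t, ht⟩ := exists_nat_gt ((ρ + β₀ - p₀ a) / (g a - u))
    have ht' : ρ + β₀ - p₀ a < t * (g a - u) := (div_lt_iff₀ (by linarith)).1 ht
    have hconj : conjFn f (p₀ + (t : ℝ) • g) ≤ ((β₀ + t * u : ℝ) : EReal) := by
      refine conjFn_le_coe_iff.2 fun x s hxs => ?_
      have h₀ : p₀ x - s ≤ β₀ := conjFn_le_coe_iff.1 hp₀ x s hxs
      change p₀ x + t * g x - s ≤ β₀ + t * u
      linarith [mul_le_mul_of_nonneg_left (hsep x s hxs).le (Nat.cast_nonneg t : (0 : ℝ) ≤ t)]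
    refine ⟨_, lt_sub_conjFn_of_conjFn_le hconj ?_⟩
    change ρ < p₀ a + t * g a - (β₀ + t * u)
    linarith

lemma le_zero_of_gphFn_conjFn_subset_dualHalfspace {f : X → EReal} (hf : InGamma f) {a : X}
    (h : gphFn (conjFn f) ⊆ dualHalfspace a) : f a ≤ 0 := by
  by_contra! ha
  obtain ⟨p, hp⟩ := exists_lt_sub_conjFn hf (ρ := 0) (by exact_mod_cast ha)
  obtain ⟨x₀, hx₀⟩ := hf.2.1
  induction hfp : conjFn f p using EReal.rec with
  | bot => exact conjFn_ne_bot hx₀ p hfp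
  | coe r =>
    have hpr : p a ≤ r := h (show (p, r) ∈ gphFn (conjFn f) from hfp)
    rw [hfp, ← EReal.coe_sub, EReal.coe_lt_coe_iff] at hp
    linarith
  | top =>
    rw [hfp, EReal.sub_top] at hp
    exact not_lt_bot hp

end Conjugate

lemma indicatorE_le_zero_iff {V : Type*} {D : Set V} {x : V} : indicatorE D x ≤ 0 ↔ x ∈ D := by
  by_cases hx : x ∈ D <;> simp [indicatorE, hx]

lemma inGamma_indicatorE {C : Set X} (hCne : C.Nonempty) (hCcl : IsClosed C) (hCcv : Convex ℝ C) :
    InGamma (indicatorE C) := by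
  have hepi : epiFn (indicatorE C) = C ×ˢ Set.Ici (0 : ℝ) := by
    ext ⟨x, s⟩
    by_cases hx : x ∈ C <;> simp [epiFn, indicatorE, hx]
  have hlsc : indicatorE C = Cᶜ.indicator fun _ => (⊤ : EReal) := by
    ext x
    by_cases hx : x ∈ C <;> simp [indicatorE, hx]
  refine ⟨fun x => ?_, ?_, ?_, ?_⟩
  · by_cases hx : x ∈ C <;> simp [indicatorE, hx]
  · obtain ⟨x, hx⟩ := hCne
    exact ⟨x, by simp [indicatorE, hx]⟩
  · change Convex ℝ (epiFn (indicatorE C))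
    exact hepi ▸ hCcv.prod (convex_Ici 0)
  · exact hlsc ▸ hCcl.isOpen_compl.lowerSemicontinuous_indicator le_top

section System

variable {I : Type*} {C : Set X} {f : I → X → EReal}

lemma notMem_closure_coneGen_epiFn_of_mem_solSet {a : X} (ha : a ∈ solSet C f) :
    ((0 : WeakDual ℝ X), (-1 : ℝ)) ∉
      closure (coneGen (epiFn (conjFn (indicatorE C)) ∪ ⋃ i, epiFn (conjFn (f i)))) :=
  notMem_closure_coneGen_of_subset_dualHalfspace <| Set.union_subset
    (epiFn_conjFn_subset_dualHalfspace (indicatorE_le_zero_iff.2 ha.1))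
    (Set.iUnion_subset fun i => epiFn_conjFn_subset_dualHalfspace (ha.2 i))

lemma closure_coneGen_gphFn_subset :
    closure (coneGen ((⋃ i, gphFn (conjFn (f i))) ∪ gphFn (conjFn (indicatorE C)))) ⊆
      closure (coneGen (epiFn (conjFn (indicatorE C)) ∪ ⋃ i, epiFn (conjFn (f i)))) :=
  closure_mono <| coneGen_mono <| Set.union_subset
    ((Set.iUnion_mono fun _ => gphFn_subset_epiFn _).trans Set.subset_union_right)
    ((gphFn_subset_epiFn _).trans Set.subset_union_left)

lemma solSet_nonempty_of_notMem_closure_coneGen_gphFn [IsTopologicalAddGroup X]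
    [ContinuousSMul ℝ X] [LocallyConvexSpace ℝ X] (hC : InGamma (indicatorE C))
    (hf : ∀ i, InGamma (f i))
    (h : ((0 : WeakDual ℝ X), (-1 : ℝ)) ∉
      closure (coneGen ((⋃ i, gphFn (conjFn (f i))) ∪ gphFn (conjFn (indicatorE C))))) :
    (solSet C f).Nonempty := by
  obtain ⟨a, ha⟩ := exists_subset_dualHalfspace_of_notMem_closure_coneGen h
  refine ⟨a, indicatorE_le_zero_iff.1 ?_, fun i => ?_⟩
  · exact le_zero_of_gphFn_conjFn_subset_dualHalfspace hC (Set.subset_union_right.trans ha)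
  · exact le_zero_of_gphFn_conjFn_subset_dualHalfspace (hf i)
      ((Set.subset_iUnion _ i).trans (Set.subset_union_left.trans ha))

end System

theorem stmt16_general [IsTopologicalAddGroup X] [ContinuousSMul ℝ X] [LocallyConvexSpace ℝ X] {I : Type*} (C : Set X) (hCne : C.Nonempty) (hCcl : IsClosed C) (hCcv : Convex ℝ C)
    (f : I → X → EReal) (hf : ∀ i, InGamma (f i)) :
    ((solSet C f).Nonempty ↔
        ((0 : WeakDual ℝ X), (-1 : ℝ)) ∉
          closure (coneGen (epiFn (conjFn (indicatorE C)) ∪ ⋃ i, epiFn (conjFn (f i))))) ∧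
      (((0 : WeakDual ℝ X), (-1 : ℝ)) ∉
          closure (coneGen (epiFn (conjFn (indicatorE C)) ∪ ⋃ i, epiFn (conjFn (f i)))) ↔
        ((0 : WeakDual ℝ X), (-1 : ℝ)) ∉
          closure (coneGen ((⋃ i, gphFn (conjFn (f i))) ∪ gphFn (conjFn (indicatorE C))))) := by
  have of_solution : (solSet C f).Nonempty → _ := fun ⟨a, ha⟩ =>
    notMem_closure_coneGen_epiFn_of_mem_solSet ha
  have solution_of :=
    solSet_nonempty_of_notMem_closure_coneGen_gphFn (inGamma_indicatorE hCne hCcl hCcv) hf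
  exact ⟨⟨of_solution, fun h => solution_of (mt (closure_coneGen_gphFn_subset ·) h)⟩,
    ⟨mt (closure_coneGen_gphFn_subset ·), fun h => of_solution (solution_of h)⟩⟩

/-- Corollary 3 (Existence theorem), equivalences (a) ⇔ (c) and (c) ⇔ (b). -/
theorem stmt16 [IsTopologicalAddGroup X] [ContinuousSMul ℝ X] [LocallyConvexSpace ℝ X] [T2Space X] {I : Type*} (C : Set X) (hCne : C.Nonempty) (hCcl : IsClosed C) (hCcv : Convex ℝ C)
    (f : I → X → EReal) (hf : ∀ i, InGamma (f i)) :
    ((solSet C f).Nonempty ↔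
        ((0 : WeakDual ℝ X), (-1 : ℝ)) ∉
          closure (coneGen (epiFn (conjFn (indicatorE C)) ∪ ⋃ i, epiFn (conjFn (f i))))) ∧
      (((0 : WeakDual ℝ X), (-1 : ℝ)) ∉
          closure (coneGen (epiFn (conjFn (indicatorE C)) ∪ ⋃ i, epiFn (conjFn (f i)))) ↔
        ((0 : WeakDual ℝ X), (-1 : ℝ)) ∉
          closure (coneGen ((⋃ i, gphFn (conjFn (f i))) ∪ gphFn (conjFn (indicatorE C))))) :=
  stmt16_general C hCne hCcl hCcv f hf
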